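/- arXiv:1710.10842 — 5 statements merged into one kernel-verified Lean document; each statement's English description precedes it below -/
import Mathlib

section
/- Let a > 0 and 0 < b < a, let f ∈ C⁰([0,1]) and g ∈ C¹([0,1]). For ε > 0 with (1 − b²/a²) − 4 a² ε² π² > 0, define α_{1±} = (−1 ± √((1 − b²/a²) − 4 a² ε² π²))/(2ε), c₁ = ∫₀¹ f(x) e^{−b x/(2 a² ε)} sin(π x) dx − (2ε/√((1 − b²/a²) − 4 a² ε² π²)) ∫₀¹ (f(x)/(2ε) − g'(x)) e^{−b x/(2 a² ε)} sin(π x) dx, d₁ the same expression with the minus sign between the two terms replaced by a plus sign, and A₁(x,t) = e^{b x/(2 a² ε)} (c₁ e^{α_{1−} t} + d₁ e^{α_{1+} t}). Then there exist constants A > 0 and ε₀ > 0, depending only on a, b, max|f| and max|g'|, such that for all 0 < ε < ε₀, all x ∈ [0,1], and all t > 0: |A₁(x,t)| ≤ A ε · exp( (b/(2 a² ε)) ( x − (a²/b)(1 − √(1 − b²/a² − 4 a² ε² π²)) t ) ). -/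
/-!
Both `c₁` and `d₁` are combinations of integrals over `[0,1]` against the weight
`e^{-bx/(2a²ε)}`, whose total mass is at most `2a²ε/b`; the `1/(2ε)` inside the second
integral is cancelled by its prefactor `2ε/√(1 - b²/a² - 4a²ε²π²)`, so `|c₁|, |d₁| = O(ε)` as soon
as that square root is bounded below, which holds for small `ε`. Since `α₁₋ ≤ α₁₊`, both time
exponentials are dominated by `e^{α₁₊ t}`, and `e^{bx/(2a²ε)} e^{α₁₊ t}` is exactly the
exponential on the right-hand side.
-/

open Set Real

/-- `α_{n−}` in the Fourier series solution. -/
noncomputable def alphaM (a b ε : ℝ) (n : ℕ) : ℝ :=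
  (-1 - Real.sqrt ((1 - b ^ 2 / a ^ 2) - 4 * a ^ 2 * n ^ 2 * ε ^ 2 * Real.pi ^ 2)) / (2 * ε)

/-- `α_{n+}` in the Fourier series solution. -/
noncomputable def alphaP (a b ε : ℝ) (n : ℕ) : ℝ :=
  (-1 + Real.sqrt ((1 - b ^ 2 / a ^ 2) - 4 * a ^ 2 * n ^ 2 * ε ^ 2 * Real.pi ^ 2)) / (2 * ε)

/-- The coefficient `c_n` of the exponential Fourier modes. -/
noncomputable def cCoef (a b ε : ℝ) (f g : ℝ → ℝ) (n : ℕ) : ℝ :=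
  (∫ x in (0:ℝ)..1, f x * Real.exp (-(b * x) / (2 * a ^ 2 * ε)) * Real.sin (n * Real.pi * x))
    - (2 * ε / Real.sqrt ((1 - b ^ 2 / a ^ 2) - 4 * a ^ 2 * n ^ 2 * ε ^ 2 * Real.pi ^ 2)) *
      ∫ x in (0:ℝ)..1, (f x / (2 * ε) - deriv g x) *
        Real.exp (-(b * x) / (2 * a ^ 2 * ε)) * Real.sin (n * Real.pi * x)

/-- The coefficient `d_n` of the exponential Fourier modes. -/
noncomputable def dCoef (a b ε : ℝ) (f g : ℝ → ℝ) (n : ℕ) : ℝ :=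
  (∫ x in (0:ℝ)..1, f x * Real.exp (-(b * x) / (2 * a ^ 2 * ε)) * Real.sin (n * Real.pi * x))
    + (2 * ε / Real.sqrt ((1 - b ^ 2 / a ^ 2) - 4 * a ^ 2 * n ^ 2 * ε ^ 2 * Real.pi ^ 2)) *
      ∫ x in (0:ℝ)..1, (f x / (2 * ε) - deriv g x) *
        Real.exp (-(b * x) / (2 * a ^ 2 * ε)) * Real.sin (n * Real.pi * x)

/-- The amplitude `A_n(x,t) = e^{bx/(2a²ε)} (c_n e^{α_{n−}t} + d_n e^{α_{n+}t})`. -/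
noncomputable def Amp (a b ε : ℝ) (f g : ℝ → ℝ) (n : ℕ) (x t : ℝ) : ℝ :=
  Real.exp (b * x / (2 * a ^ 2 * ε)) *
    (cCoef a b ε f g n * Real.exp (alphaM a b ε n * t)
      + dCoef a b ε f g n * Real.exp (alphaP a b ε n * t))

theorem integral_exp_neg_mul_zero_one {l : ℝ} (hl : l ≠ 0) :
    ∫ y in (0:ℝ)..1, exp (-(l * y)) = (1 - exp (-l)) / l := by
  have := intervalIntegral.integral_comp_mul_left (a := 0) (b := 1) (fun u => exp (-u)) hl
  simp only [mul_zero, mul_one] at this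
  rw [this, intervalIntegral.integral_comp_neg, integral_exp]
  simp only [neg_zero, exp_zero, smul_eq_mul]
  field_simp

theorem abs_intervalIntegral_le_of_abs_le_mul_exp_neg {ψ : ℝ → ℝ} {l M : ℝ} (hl : 0 < l)
    (hψ : ∀ y ∈ Icc (0:ℝ) 1, |ψ y| ≤ M * exp (-(l * y))) :
    |∫ y in (0:ℝ)..1, ψ y| ≤ M / l := by
  have hM : 0 ≤ M := by
    simpa using (abs_nonneg _).trans (hψ 0 (left_mem_Icc.2 zero_le_one))
  have hint : IntervalIntegrable (fun y => M * exp (-(l * y))) MeasureTheory.volume 0 1 :=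
    (by fun_prop : Continuous _).intervalIntegrable 0 1
  calc |∫ y in (0:ℝ)..1, ψ y|
      ≤ ∫ y in (0:ℝ)..1, M * exp (-(l * y)) := by
        rw [← Real.norm_eq_abs]
        refine intervalIntegral.norm_integral_le_of_norm_le zero_le_one
          (.of_forall fun y hy => ?_) hint
        rw [Real.norm_eq_abs]
        exact hψ y (Ioc_subset_Icc_self hy)
    _ = M * (1 - exp (-l)) / l := by
        rw [intervalIntegral.integral_const_mul, integral_exp_neg_mul_zero_one hl.ne', mul_div_assoc]
    _ ≤ M / l := by
        gcongr
        exact mul_le_of_le_one_right hM (by linarith [exp_pos (-l)])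

theorem ContDiffOn.exists_abs_deriv_le {g : ℝ → ℝ} {s : Set ℝ} (hs : IsCompact s)
    (hs' : UniqueDiffOn ℝ s) (hg : ContDiffOn ℝ 1 g s) :
    ∃ M, 0 ≤ M ∧ ∀ y ∈ s, |deriv g y| ≤ M := by
  obtain ⟨M, hM⟩ := hs.exists_bound_of_continuousOn (hg.continuousOn_derivWithin hs' le_rfl)
  refine ⟨max M 0, le_max_right _ _, fun y hy => ?_⟩
  by_cases hd : DifferentiableAt ℝ g y
  · rw [← hd.derivWithin (hs' y hy)]
    exact (hM y hy).trans (le_max_left _ _)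
  · simp [deriv_zero_of_not_differentiableAt hd]

noncomputable def discr (a b ε : ℝ) (n : ℕ) : ℝ :=
  (1 - b ^ 2 / a ^ 2) - 4 * a ^ 2 * n ^ 2 * ε ^ 2 * Real.pi ^ 2

noncomputable def sineMoment (a b ε : ℝ) (n : ℕ) (φ : ℝ → ℝ) : ℝ :=
  ∫ x in (0:ℝ)..1, φ x * Real.exp (-(b * x) / (2 * a ^ 2 * ε)) * Real.sin (n * Real.pi * x)

section Coefficients

variable {a b ε : ℝ} {n : ℕ} {f g : ℝ → ℝ} {Mf Mg : ℝ}

theorem cCoef_eq : cCoef a b ε f g n = sineMoment a b ε n f -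
    2 * ε / √(discr a b ε n) * sineMoment a b ε n (fun x => f x / (2 * ε) - deriv g x) := rfl

theorem dCoef_eq : dCoef a b ε f g n = sineMoment a b ε n f +
    2 * ε / √(discr a b ε n) * sineMoment a b ε n (fun x => f x / (2 * ε) - deriv g x) := rfl

theorem abs_sineMoment_le {φ : ℝ → ℝ} {M : ℝ} (ha : a ≠ 0) (hb : 0 < b) (hε : 0 < ε)
    (hφ : ∀ y ∈ Icc (0:ℝ) 1, |φ y| ≤ M) :
    |sineMoment a b ε n φ| ≤ 2 * a ^ 2 * ε / b * M := by
  have hM : 0 ≤ M := (abs_nonneg _).trans (hφ 0 (left_mem_Icc.2 zero_le_one))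
  have hl : 0 < b / (2 * a ^ 2 * ε) := by positivity
  rw [sineMoment]
  refine (abs_intervalIntegral_le_of_abs_le_mul_exp_neg (M := M) hl fun y hy => ?_).trans_eq
    (by field_simp)
  rw [abs_mul, abs_mul, abs_of_pos (exp_pos _)]
  calc |φ y| * exp (-(b * y) / (2 * a ^ 2 * ε)) * |sin (n * π * y)|
      ≤ M * exp (-(b * y) / (2 * a ^ 2 * ε)) * 1 := by
        gcongr
        exacts [hφ y hy, abs_sin_le_one _]
    _ = M * exp (-(b / (2 * a ^ 2 * ε) * y)) := by ring_nf

theorem abs_sineMoment_add_le (ha : a ≠ 0) (hb : 0 < b) (hε : 0 < ε)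
    (hf : ∀ y ∈ Icc (0:ℝ) 1, |f y| ≤ Mf) (hg : ∀ y ∈ Icc (0:ℝ) 1, |deriv g y| ≤ Mg) :
    |sineMoment a b ε n f| + 2 * ε / √(discr a b ε n) *
        |sineMoment a b ε n (fun x => f x / (2 * ε) - deriv g x)| ≤
      2 * a ^ 2 * ε / b * (Mf + (Mf + 2 * ε * Mg) / √(discr a b ε n)) := by
  have hφ : ∀ y ∈ Icc (0:ℝ) 1, |f y / (2 * ε) - deriv g y| ≤ Mf / (2 * ε) + Mg := fun y hy => by
    refine (abs_sub _ _).trans (add_le_add ?_ (hg y hy))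
    rw [abs_div, abs_of_pos (by positivity : (0:ℝ) < 2 * ε)]
    gcongr
    exact hf y hy
  calc _ ≤ 2 * a ^ 2 * ε / b * Mf + 2 * ε / √(discr a b ε n) *
          (2 * a ^ 2 * ε / b * (Mf / (2 * ε) + Mg)) := by
        gcongr
        exacts [abs_sineMoment_le ha hb hε hf, abs_sineMoment_le ha hb hε hφ]
    _ = _ := by field_simp

theorem abs_cCoef_le (ha : a ≠ 0) (hb : 0 < b) (hε : 0 < ε)
    (hf : ∀ y ∈ Icc (0:ℝ) 1, |f y| ≤ Mf) (hg : ∀ y ∈ Icc (0:ℝ) 1, |deriv g y| ≤ Mg) :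
    |cCoef a b ε f g n| ≤ 2 * a ^ 2 * ε / b * (Mf + (Mf + 2 * ε * Mg) / √(discr a b ε n)) := by
  rw [cCoef_eq]
  refine (abs_sub _ _).trans (le_of_eq_of_le ?_ (abs_sineMoment_add_le ha hb hε hf hg))
  rw [abs_mul, abs_of_nonneg (by positivity : (0:ℝ) ≤ 2 * ε / √(discr a b ε n))]

theorem abs_dCoef_le (ha : a ≠ 0) (hb : 0 < b) (hε : 0 < ε)
    (hf : ∀ y ∈ Icc (0:ℝ) 1, |f y| ≤ Mf) (hg : ∀ y ∈ Icc (0:ℝ) 1, |deriv g y| ≤ Mg) :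
    |dCoef a b ε f g n| ≤ 2 * a ^ 2 * ε / b * (Mf + (Mf + 2 * ε * Mg) / √(discr a b ε n)) := by
  rw [dCoef_eq]
  refine (abs_add_le _ _).trans (le_of_eq_of_le ?_ (abs_sineMoment_add_le ha hb hε hf hg))
  rw [abs_mul, abs_of_nonneg (by positivity : (0:ℝ) ≤ 2 * ε / √(discr a b ε n))]

end Coefficients

theorem alphaM_le_alphaP {a b ε : ℝ} (n : ℕ) (hε : 0 < ε) : alphaM a b ε n ≤ alphaP a b ε n := by
  rw [alphaM, alphaP]
  gcongr
  linarith [sqrt_nonneg ((1 - b ^ 2 / a ^ 2) - 4 * a ^ 2 * n ^ 2 * ε ^ 2 * π ^ 2)]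

theorem abs_mul_exp_add_mul_exp_le {c d α β t : ℝ} (hαβ : α ≤ β) (ht : 0 ≤ t) :
    |c * exp (α * t) + d * exp (β * t)| ≤ (|c| + |d|) * exp (β * t) := by
  have hexp : exp (α * t) ≤ exp (β * t) := by gcongr
  calc |c * exp (α * t) + d * exp (β * t)| ≤ |c| * exp (α * t) + |d| * exp (β * t) := by
        simpa only [abs_mul, abs_exp] using abs_add_le (c * exp (α * t)) (d * exp (β * t))
    _ ≤ (|c| + |d|) * exp (β * t) := by nlinarith [abs_nonneg c]

theorem sqrt_half_le_sqrt_discr_one {a b ε : ℝ} (ha : a ≠ 0) (hε : 0 ≤ ε)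
    (hεlt : ε < √((1 - b ^ 2 / a ^ 2) / (8 * a ^ 2 * π ^ 2))) :
    √((1 - b ^ 2 / a ^ 2) / 2) ≤ √(discr a b ε 1) := by
  have h := (lt_sqrt hε).1 hεlt
  rw [lt_div_iff₀ (by positivity)] at h
  exact sqrt_le_sqrt (by simp only [discr, Nat.cast_one]; nlinarith)

theorem exp_mul_exp_alphaP_one {a b ε : ℝ} (x t : ℝ) (ha : a ≠ 0) (hb : b ≠ 0) :
    exp (b * x / (2 * a ^ 2 * ε)) * exp (alphaP a b ε 1 * t) =
      exp (b / (2 * a ^ 2 * ε) *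
        (x - a ^ 2 / b * (1 - √(1 - b ^ 2 / a ^ 2 - 4 * a ^ 2 * ε ^ 2 * π ^ 2)) * t)) := by
  rw [← exp_add, alphaP]
  simp only [Nat.cast_one, one_pow, mul_one]
  field_simp
  ring_nf

theorem first_mode_bound_general
    (a b : ℝ) (hb : 0 < b) (hba : b < a)
    (f g : ℝ → ℝ) (hf : ContinuousOn f (Icc 0 1)) (hg : ContDiffOn ℝ 1 g (Icc 0 1)) :
    ∃ A > (0:ℝ), ∃ ε₀ > (0:ℝ), ∀ ε : ℝ, 0 < ε → ε < ε₀ →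
      ∀ x ∈ Icc (0:ℝ) 1, ∀ t : ℝ, 0 < t →
        |Amp a b ε f g 1 x t| ≤ A * ε *
          Real.exp ((b / (2 * a ^ 2 * ε)) *
            (x - (a ^ 2 / b) *
              (1 - Real.sqrt (1 - b ^ 2 / a ^ 2 - 4 * a ^ 2 * ε ^ 2 * π ^ 2)) * t)) := by
  have ha : 0 < a := hb.trans hba
  obtain ⟨Mf, hMf⟩ := isCompact_Icc.exists_bound_of_continuousOn hf
  simp only [Real.norm_eq_abs] at hMf
  obtain ⟨Mg, hMg0, hMg⟩ := hg.exists_abs_deriv_le isCompact_Icc (uniqueDiffOn_Icc one_pos)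
  have hMf0 : 0 ≤ Mf := (abs_nonneg _).trans (hMf 0 (left_mem_Icc.2 zero_le_one))
  have hκ : 0 < 1 - b ^ 2 / a ^ 2 := sub_pos.2 ((div_lt_one (by positivity)).2 (by nlinarith))
  set s₀ := √((1 - b ^ 2 / a ^ 2) / 2)
  have hs₀ : 0 < s₀ := sqrt_pos.2 (half_pos hκ)
  set K := 2 * a ^ 2 / b * (Mf + (Mf + 2 * Mg) / s₀)
  refine ⟨2 * K + 1, by positivity, min 1 √((1 - b ^ 2 / a ^ 2) / (8 * a ^ 2 * π ^ 2)),
    by positivity, fun ε hε hεε₀ x _ t ht => ?_⟩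
  have hε1 : ε ≤ 1 := (hεε₀.trans_le (min_le_left _ _)).le
  have hs₀_le := sqrt_half_le_sqrt_discr_one ha.ne' hε.le (hεε₀.trans_le (min_le_right _ _))
  have hcoef : 2 * a ^ 2 * ε / b * (Mf + (Mf + 2 * ε * Mg) / √(discr a b ε 1)) ≤ K * ε := by
    rw [show K * ε = 2 * a ^ 2 * ε / b * (Mf + (Mf + 2 * Mg) / s₀) by ring]
    gcongr
    nlinarith
  have hc := (abs_cCoef_le ha.ne' hb hε hMf hMg).trans hcoef
  have hd := (abs_dCoef_le ha.ne' hb hε hMf hMg).trans hcoef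
  calc |Amp a b ε f g 1 x t|
      ≤ exp (b * x / (2 * a ^ 2 * ε)) * ((|cCoef a b ε f g 1| + |dCoef a b ε f g 1|) *
          exp (alphaP a b ε 1 * t)) := by
        rw [Amp, abs_mul, abs_exp]
        gcongr
        exact abs_mul_exp_add_mul_exp_le (alphaM_le_alphaP 1 hε) ht.le
    _ ≤ exp (b * x / (2 * a ^ 2 * ε)) * ((K * ε + K * ε) * exp (alphaP a b ε 1 * t)) := by
        gcongr
    _ ≤ (2 * K + 1) * ε * (exp (b * x / (2 * a ^ 2 * ε)) * exp (alphaP a b ε 1 * t)) := by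
        nlinarith [mul_pos (exp_pos (b * x / (2 * a ^ 2 * ε))) (exp_pos (alphaP a b ε 1 * t))]
    _ = _ := by rw [exp_mul_exp_alphaP_one x t ha.ne' hb.ne']

/-- Bound on the amplitude of the first Fourier mode: there are `A > 0` and `ε₀ > 0`,
depending only on `a`, `b`, `max |f|` and `max |g'|`, such that for all `0 < ε < ε₀`,
`x ∈ [0,1]`, `t > 0`:
`|A₁(x,t)| ≤ A ε exp((b/(2a²ε)) (x − (a²/b)(1 − √(1 − b²/a² − 4a²ε²π²)) t))`. -/
theorem first_mode_bound
    (a b : ℝ) (ha : 0 < a) (hb : 0 < b) (hba : b < a)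
    (f g : ℝ → ℝ) (hf : ContinuousOn f (Icc 0 1)) (hg : ContDiffOn ℝ 1 g (Icc 0 1)) :
    ∃ A > (0:ℝ), ∃ ε₀ > (0:ℝ), ∀ ε : ℝ, 0 < ε → ε < ε₀ →
      ∀ x ∈ Icc (0:ℝ) 1, ∀ t : ℝ, 0 < t →
        |Amp a b ε f g 1 x t| ≤ A * ε *
          Real.exp ((b / (2 * a ^ 2 * ε)) *
            (x - (a ^ 2 / b) *
              (1 - Real.sqrt (1 - b ^ 2 / a ^ 2 - 4 * a ^ 2 * ε ^ 2 * π ^ 2)) * t)) :=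
  first_mode_bound_general a b hb hba f g hf hg
end

section
/- Let a > 0, let f ∈ C⁰([0,1]) and g ∈ C¹([0,1]), and fix a positive integer n and a time t > 0. For ε > 0 with 1 − 4 a² n² ε² π² > 0, define α_{n±} = (−1 ± √(1 − 4 a² n² ε² π²))/(2ε), c_n = ∫₀¹ f(x) sin(n π x) dx − (2ε/√(1 − 4 a² n² ε² π²)) ∫₀¹ (f(x)/(2ε) − g'(x)) sin(n π x) dx, d_n = ∫₀¹ f(x) sin(n π x) dx + (2ε/√(1 − 4 a² n² ε² π²)) ∫₀¹ (f(x)/(2ε) − g'(x)) sin(n π x) dx, and A_n(t) = c_n e^{α_{n−} t} + d_n e^{α_{n+} t}. Then A_n(t) → a_n := 2 ∫₀¹ f(x) sin(n π x) dx as ε → 0⁺. -/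
/-!
With `F = ∫ f sin(nπx)`, `G = ∫ g' sin(nπx)` and `s = √(1 - 4a²n²π²ε²)`, the `1/ε` hidden in the
integrand cancels against the prefactor `2ε`, so `c_n = F - (F - 2εG)/s → 0` and
`d_n = F + (F - 2εG)/s → 2F`. For `t ≥ 0` the fast mode `e^{α₋t}` stays in `(0, 1]`, and the slow
exponent `α₊ = (s - 1)/(2ε)` is half a difference quotient of `s` at `0`, where `s` has derivative
`0`; hence `e^{α₊t} → 1`.
-/

open Set Real Filter MeasureTheory Topology

theorem ContDiffOn.intervalIntegrable_deriv {g : ℝ → ℝ} {a b : ℝ} (hab : a < b)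
    (hg : ContDiffOn ℝ 1 g (Icc a b)) : IntervalIntegrable (deriv g) volume a b := by
  have hcont : ContinuousOn (derivWithin g (Icc a b)) (Icc a b) :=
    hg.continuousOn_derivWithin (uniqueDiffOn_Icc hab) le_rfl
  rw [intervalIntegrable_iff_integrableOn_Ioo_of_le hab.le]
  refine (hcont.integrableOn_Icc.mono_set Ioo_subset_Icc_self).congr_fun
    (fun x hx => derivWithin_of_mem_nhds (Icc_mem_nhds hx.1 hx.2)) measurableSet_Ioo

theorem intervalIntegral.integral_div_sub_mul {u v w : ℝ → ℝ} {a b : ℝ}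
    (hu : IntervalIntegrable (fun x => u x * w x) volume a b)
    (hv : IntervalIntegrable (fun x => v x * w x) volume a b) (c : ℝ) :
    ∫ x in a..b, (u x / c - v x) * w x = (∫ x in a..b, u x * w x) / c - ∫ x in a..b, v x * w x := by
  simp_rw [sub_mul, div_mul_eq_mul_div]
  rw [intervalIntegral.integral_sub (hu.div_const c) hv, intervalIntegral.integral_div]

theorem hasDerivAt_sqrt_one_sub_mul_sq_zero (c : ℝ) :
    HasDerivAt (fun ε : ℝ => √(1 - c * ε ^ 2)) 0 0 := by
  simpa using (((hasDerivAt_pow 2 (0 : ℝ)).const_mul c).const_sub 1).sqrt (by simp)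

theorem tendsto_neg_one_add_sqrt_one_sub_mul_sq_div (c : ℝ) :
    Tendsto (fun ε : ℝ => (-1 + √(1 - c * ε ^ 2)) / (2 * ε)) (𝓝[>] 0) (𝓝 0) := by
  have h := ((hasDerivAt_sqrt_one_sub_mul_sq_zero c).tendsto_slope_zero_right).const_mul (1 / 2)
  rw [mul_zero] at h
  refine h.congr fun ε => ?_
  simp only [zero_add, smul_eq_mul, ne_eq, OfNat.ofNat_ne_zero, not_false_eq_true, zero_pow,
    mul_zero, sub_zero, sqrt_one]
  ring

theorem tendsto_damped_mode_amplitude (F G c t : ℝ) (ht : 0 ≤ t) :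
    Tendsto (fun ε : ℝ =>
      (F - (F - 2 * ε * G) / √(1 - c * ε ^ 2)) * exp ((-1 - √(1 - c * ε ^ 2)) / (2 * ε) * t)
      + (F + (F - 2 * ε * G) / √(1 - c * ε ^ 2)) * exp ((-1 + √(1 - c * ε ^ 2)) / (2 * ε) * t))
      (𝓝[>] 0) (𝓝 (2 * F)) := by
  have hcoef : Tendsto (fun ε : ℝ => (F - 2 * ε * G) / √(1 - c * ε ^ 2)) (𝓝[>] 0) (𝓝 F) := by
    have hcont : ContinuousAt (fun ε : ℝ => (F - 2 * ε * G) / √(1 - c * ε ^ 2)) 0 :=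
      by fun_prop (disch := simp)
    simpa using hcont.tendsto.mono_left nhdsWithin_le_nhds
  have hdecay : IsBoundedUnder (· ≤ ·) (𝓝[>] 0)
      (norm ∘ fun ε : ℝ => exp ((-1 - √(1 - c * ε ^ 2)) / (2 * ε) * t)) := by
    refine isBoundedUnder_of_eventually_le (a := 1) ?_
    filter_upwards [self_mem_nhdsWithin] with ε (hε : 0 < ε)
    rw [Function.comp_apply, norm_of_nonneg (exp_pos _).le, exp_le_one_iff]
    exact mul_nonpos_of_nonpos_of_nonneg
      (div_nonpos_of_nonpos_of_nonneg (by linarith [sqrt_nonneg (1 - c * ε ^ 2)]) (by linarith)) ht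
  have hfast := (sub_self F ▸ tendsto_const_nhds.sub hcoef).zero_mul_isBoundedUnder_le hdecay
  have hslow := ((tendsto_const_nhds (x := F)).add hcoef).mul
    (((tendsto_neg_one_add_sqrt_one_sub_mul_sq_div c).mul_const t).rexp)
  simpa [two_mul] using hfast.add hslow

theorem mode_amplitude_limit_general
    (a : ℝ) (f g : ℝ → ℝ)
    (hf : ContinuousOn f (Icc 0 1)) (hg : ContDiffOn ℝ 1 g (Icc 0 1))
    (n : ℕ) (t : ℝ) (ht : 0 < t) :
    Filter.Tendsto (fun ε : ℝ =>
      ((∫ x in (0:ℝ)..1, f x * Real.sin (n * π * x))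
          - (2 * ε / Real.sqrt (1 - 4 * a ^ 2 * n ^ 2 * ε ^ 2 * π ^ 2)) *
            ∫ x in (0:ℝ)..1, (f x / (2 * ε) - deriv g x) * Real.sin (n * π * x)) *
        Real.exp ((-1 - Real.sqrt (1 - 4 * a ^ 2 * n ^ 2 * ε ^ 2 * π ^ 2)) / (2 * ε) * t)
      + ((∫ x in (0:ℝ)..1, f x * Real.sin (n * π * x))
          + (2 * ε / Real.sqrt (1 - 4 * a ^ 2 * n ^ 2 * ε ^ 2 * π ^ 2)) *
            ∫ x in (0:ℝ)..1, (f x / (2 * ε) - deriv g x) * Real.sin (n * π * x)) *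
        Real.exp ((-1 + Real.sqrt (1 - 4 * a ^ 2 * n ^ 2 * ε ^ 2 * π ^ 2)) / (2 * ε) * t))
      (nhdsWithin 0 (Set.Ioi 0))
      (nhds (2 * ∫ x in (0:ℝ)..1, f x * Real.sin (n * π * x))) := by
  have hsin : ContinuousOn (fun x : ℝ => sin (n * π * x)) (Icc 0 1) := by fun_prop
  have hfs : IntervalIntegrable (fun x => f x * sin (n * π * x)) volume 0 1 :=
    (hf.mul hsin).intervalIntegrable_of_Icc zero_le_one
  have hgs : IntervalIntegrable (fun x => deriv g x * sin (n * π * x)) volume 0 1 :=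
    (hg.intervalIntegrable_deriv zero_lt_one).mul_continuousOn (by simpa using hsin)
  refine (tendsto_damped_mode_amplitude _ (∫ x in (0:ℝ)..1, deriv g x * sin (n * π * x))
    (4 * a ^ 2 * n ^ 2 * π ^ 2) t ht.le).congr' ?_
  filter_upwards [self_mem_nhdsWithin] with ε (hε : 0 < ε)
  have hsplit : 2 * ε * ∫ x in (0:ℝ)..1, (f x / (2 * ε) - deriv g x) * sin (n * π * x)
      = (∫ x in (0:ℝ)..1, f x * sin (n * π * x))
        - 2 * ε * ∫ x in (0:ℝ)..1, deriv g x * sin (n * π * x) := by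
    rw [intervalIntegral.integral_div_sub_mul hfs hgs, mul_sub, mul_div_cancel₀ _ (by positivity)]
  simp only [div_mul_eq_mul_div, hsplit, mul_right_comm _ (ε ^ 2) (π ^ 2)]

/-- In the case `b = 0`, for a fixed mode `n` and a fixed time `t > 0`, the amplitude
`A_n(t) = c_n e^{α_{n−}t} + d_n e^{α_{n+}t}` converges, as `ε → 0⁺`, to the Fourier sine
coefficient `a_n = 2∫₀¹ f(x) sin(nπx) dx` of the equilibrium solution. -/
theorem mode_amplitude_limit
    (a : ℝ) (ha : 0 < a) (f g : ℝ → ℝ)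
    (hf : ContinuousOn f (Icc 0 1)) (hg : ContDiffOn ℝ 1 g (Icc 0 1))
    (n : ℕ) (hn : 0 < n) (t : ℝ) (ht : 0 < t) :
    Filter.Tendsto (fun ε : ℝ =>
      ((∫ x in (0:ℝ)..1, f x * Real.sin (n * π * x))
          - (2 * ε / Real.sqrt (1 - 4 * a ^ 2 * n ^ 2 * ε ^ 2 * π ^ 2)) *
            ∫ x in (0:ℝ)..1, (f x / (2 * ε) - deriv g x) * Real.sin (n * π * x)) *
        Real.exp ((-1 - Real.sqrt (1 - 4 * a ^ 2 * n ^ 2 * ε ^ 2 * π ^ 2)) / (2 * ε) * t)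
      + ((∫ x in (0:ℝ)..1, f x * Real.sin (n * π * x))
          + (2 * ε / Real.sqrt (1 - 4 * a ^ 2 * n ^ 2 * ε ^ 2 * π ^ 2)) *
            ∫ x in (0:ℝ)..1, (f x / (2 * ε) - deriv g x) * Real.sin (n * π * x)) *
        Real.exp ((-1 + Real.sqrt (1 - 4 * a ^ 2 * n ^ 2 * ε ^ 2 * π ^ 2)) / (2 * ε) * t))
      (nhdsWithin 0 (Set.Ioi 0))
      (nhds (2 * ∫ x in (0:ℝ)..1, f x * Real.sin (n * π * x))) :=
  mode_amplitude_limit_general a f g hf hg n t ht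
end

section
/- Let a > 0, let f ∈ C⁰([0,1]) and g ∈ C¹([0,1]), fix an integer m ≥ 1 and a time t > 0. For ε > 0 let k = k(ε) = ⌊1/(2 a π ε)⌋ and n = k + m, and define β_n = √(4 a² n² ε² π² − 1)/(2ε), c_n = 2∫₀¹ f(x) sin(n π x) dx, d_n = (4ε/√(4 a² n² ε² π² − 1)) ∫₀¹ (f(x)/(2ε) − g'(x)) sin(n π x) dx, and A_n(t) = e^{−t/(2ε)} (c_n cos(β_n t) + d_n sin(β_n t)). Then A_{k(ε)+m}(t) → 0 as ε → 0⁺. -/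
/-!
The prefactor `e^{-t/(2ε)}` decays faster than any power of `ε`, while both terms in the bracket
are `O(1/ε)`. The first is at most `2 sup |f|`. In the second, the factor `1/√(4a²n²ε²π² - 1)` of
`d_n` cancels against `|sin (β_n t)| ≤ β_n t`, leaving `2t |∫ (f/(2ε) - g') sin (nπx)| = O(1/ε)`.
-/

open Set Real Filter Topology MeasureTheory Interval

theorem abs_sin_mul_div_le (r c : ℝ) : |sin (r * c) / r| ≤ |c| := by
  rcases eq_or_ne r 0 with rfl | hr
  · simp
  rw [abs_div, div_le_iff₀ (abs_pos.mpr hr), mul_comm, ← abs_mul]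
  exact abs_sin_le_abs

theorem abs_integral_mul_sin_le {h : ℝ → ℝ} {a b C : ℝ} (hab : a ≤ b)
    (hC : ∀ x ∈ Ioo a b, |h x| ≤ C) (ω : ℝ) :
    |∫ x in a..b, h x * sin (ω * x)| ≤ C * (b - a) := by
  have hbound : ∀ᵐ x, x ∈ Ι a b → ‖h x * sin (ω * x)‖ ≤ C := by
    filter_upwards [Ioo_ae_eq_Ioc.mem_iff] with x hx hxab
    rw [uIoc_of_le hab, ← hx] at hxab
    rw [norm_mul, Real.norm_eq_abs, Real.norm_eq_abs]
    exact (mul_le_of_le_one_right (abs_nonneg _) (abs_sin_le_one _)).trans (hC x hxab)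
  simpa [abs_of_nonneg (sub_nonneg.mpr hab)] using
    intervalIntegral.norm_integral_le_of_norm_le_const_ae hbound

theorem ContDiffOn.exists_abs_deriv_le_s11 {g : ℝ → ℝ} {a b : ℝ} (hab : a < b)
    (hg : ContDiffOn ℝ 1 g (Icc a b)) : ∃ G, ∀ x ∈ Ioo a b, |deriv g x| ≤ G := by
  obtain ⟨G, hG⟩ := isCompact_Icc.exists_bound_of_continuousOn
    (hg.continuousOn_derivWithin (uniqueDiffOn_Icc hab) le_rfl)
  refine ⟨G, fun x hx => ?_⟩
  rw [← derivWithin_of_mem_nhds (Icc_mem_nhds hx.1 hx.2)]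
  exact hG x (Ioo_subset_Icc_self hx)

theorem tendsto_exp_neg_mul_add_mul_atTop (A B : ℝ) :
    Tendsto (fun s => exp (-s) * (A + B * s)) atTop (𝓝 0) := by
  have h := (tendsto_exp_neg_atTop_nhds_zero.const_mul A).add
    ((tendsto_pow_mul_exp_neg_atTop_nhds_zero 1).const_mul B)
  simp only [mul_zero, add_zero, pow_one] at h
  exact h.congr fun s => by ring

theorem tendsto_div_two_mul_nhdsGT_zero {t : ℝ} (ht : 0 < t) :
    Tendsto (fun ε => t / (2 * ε)) (𝓝[>] 0) atTop :=
  (tendsto_inv_nhdsGT_zero.const_mul_atTop (half_pos ht)).congr fun ε => by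
    field_simp

theorem abs_two_mul_cos_add_div_mul_sin_le {ε t : ℝ} (hε : 0 < ε) (ht : 0 ≤ t)
    (r c I J : ℝ) :
    |2 * I * cos c + 4 * ε / r * J * sin (r / (2 * ε) * t)| ≤ 2 * |I| + 2 * t * |J| := by
  have hsin : 4 * ε / r * J * sin (r / (2 * ε) * t)
      = 4 * ε * J * (sin (r * (t / (2 * ε))) / r) := by ring_nf
  have hcos : |2 * I * cos c| ≤ 2 * |I| := by
    rw [abs_mul, abs_mul, abs_two]
    exact mul_le_of_le_one_right (by positivity) (abs_cos_le_one c)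
  calc |2 * I * cos c + 4 * ε / r * J * sin (r / (2 * ε) * t)|
      ≤ 2 * |I| + |4 * ε * J| * |t / (2 * ε)| := by
        refine (abs_add_le _ _).trans (add_le_add hcos ?_)
        rw [hsin, abs_mul]
        exact mul_le_mul_of_nonneg_left (abs_sin_mul_div_le _ _) (abs_nonneg _)
    _ = 2 * |I| + 2 * t * |J| := by
        rw [abs_mul, abs_of_pos (by positivity : (0:ℝ) < 4 * ε),
          abs_of_nonneg (by positivity : 0 ≤ t / (2 * ε))]
        field_simp
        ring

theorem oscillatory_mode_amplitude_limit_general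
    (a : ℝ) (f g : ℝ → ℝ)
    (hf : ContinuousOn f (Icc 0 1)) (hg : ContDiffOn ℝ 1 g (Icc 0 1))
    (m : ℕ) (t : ℝ) (ht : 0 < t) :
    Filter.Tendsto (fun ε : ℝ =>
      Real.exp (-t / (2 * ε)) *
        ((2 * ∫ x in (0:ℝ)..1, f x *
              Real.sin (((⌊1 / (2 * a * π * ε)⌋₊ + m : ℕ) : ℝ) * π * x)) *
            Real.cos (Real.sqrt (4 * a ^ 2 * ((⌊1 / (2 * a * π * ε)⌋₊ + m : ℕ) : ℝ) ^ 2
              * ε ^ 2 * π ^ 2 - 1) / (2 * ε) * t)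
          + ((4 * ε / Real.sqrt (4 * a ^ 2 * ((⌊1 / (2 * a * π * ε)⌋₊ + m : ℕ) : ℝ) ^ 2
                * ε ^ 2 * π ^ 2 - 1)) *
              ∫ x in (0:ℝ)..1, (f x / (2 * ε) - deriv g x) *
                Real.sin (((⌊1 / (2 * a * π * ε)⌋₊ + m : ℕ) : ℝ) * π * x)) *
            Real.sin (Real.sqrt (4 * a ^ 2 * ((⌊1 / (2 * a * π * ε)⌋₊ + m : ℕ) : ℝ) ^ 2
              * ε ^ 2 * π ^ 2 - 1) / (2 * ε) * t)))
      (nhdsWithin 0 (Set.Ioi 0)) (nhds 0) := by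
  obtain ⟨M, hM⟩ := isCompact_Icc.exists_bound_of_continuousOn hf
  obtain ⟨G, hG⟩ := hg.exists_abs_deriv_le_s11 zero_lt_one
  refine squeeze_zero_norm' ?_
    ((tendsto_exp_neg_mul_add_mul_atTop (2 * M + 2 * t * G) (2 * M)).comp
      (tendsto_div_two_mul_nhdsGT_zero ht))
  filter_upwards [self_mem_nhdsWithin] with ε (hε : 0 < ε)
  set ω := ((⌊1 / (2 * a * π * ε)⌋₊ + m : ℕ) : ℝ) * π
  have hf_le : ∀ x ∈ Ioo (0:ℝ) 1, |f x| ≤ M := fun x hx => hM x (Ioo_subset_Icc_self hx)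
  have hI := abs_integral_mul_sin_le zero_le_one hf_le ω
  have hJ_le : ∀ x ∈ Ioo (0:ℝ) 1, |f x / (2 * ε) - deriv g x| ≤ M / (2 * ε) + G := by
    intro x hx
    refine (abs_sub _ _).trans (add_le_add ?_ (hG x hx))
    rw [abs_div, abs_of_pos (by positivity : (0:ℝ) < 2 * ε)]
    exact div_le_div_of_nonneg_right (hf_le x hx) (by positivity)
  have hJ := abs_integral_mul_sin_le zero_le_one hJ_le ω
  rw [Function.comp_apply, norm_mul, norm_of_nonneg (exp_pos _).le, neg_div]
  refine mul_le_mul_of_nonneg_left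
    ((abs_two_mul_cos_add_div_mul_sin_le hε ht.le _ _ _ _).trans ?_) (exp_pos _).le
  calc _ ≤ 2 * M + 2 * t * (M / (2 * ε) + G) := by
        simp only [sub_zero, mul_one] at hI hJ
        gcongr
    _ = 2 * M + 2 * t * G + 2 * M * (t / (2 * ε)) := by field_simp; ring

/-- In the case `b = 0`, for a fixed `m ≥ 1` and a fixed time `t > 0`, the amplitude
`A_{k(ε)+m}(t) = e^{−t/(2ε)} (c_n cos(β_n t) + d_n sin(β_n t))` of the oscillatory mode
`n = k(ε) + m`, with `k(ε) = ⌊1/(2aπε)⌋`, tends to `0` as `ε → 0⁺`. -/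
theorem oscillatory_mode_amplitude_limit
    (a : ℝ) (ha : 0 < a) (f g : ℝ → ℝ)
    (hf : ContinuousOn f (Icc 0 1)) (hg : ContDiffOn ℝ 1 g (Icc 0 1))
    (m : ℕ) (hm : 1 ≤ m) (t : ℝ) (ht : 0 < t) :
    Filter.Tendsto (fun ε : ℝ =>
      Real.exp (-t / (2 * ε)) *
        ((2 * ∫ x in (0:ℝ)..1, f x *
              Real.sin (((⌊1 / (2 * a * π * ε)⌋₊ + m : ℕ) : ℝ) * π * x)) *
            Real.cos (Real.sqrt (4 * a ^ 2 * ((⌊1 / (2 * a * π * ε)⌋₊ + m : ℕ) : ℝ) ^ 2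
              * ε ^ 2 * π ^ 2 - 1) / (2 * ε) * t)
          + ((4 * ε / Real.sqrt (4 * a ^ 2 * ((⌊1 / (2 * a * π * ε)⌋₊ + m : ℕ) : ℝ) ^ 2
                * ε ^ 2 * π ^ 2 - 1)) *
              ∫ x in (0:ℝ)..1, (f x / (2 * ε) - deriv g x) *
                Real.sin (((⌊1 / (2 * a * π * ε)⌋₊ + m : ℕ) : ℝ) * π * x)) *
            Real.sin (Real.sqrt (4 * a ^ 2 * ((⌊1 / (2 * a * π * ε)⌋₊ + m : ℕ) : ℝ) ^ 2
              * ε ^ 2 * π ^ 2 - 1) / (2 * ε) * t)))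
      (nhdsWithin 0 (Set.Ioi 0)) (nhds 0) :=
  oscillatory_mode_amplitude_limit_general a f g hf hg m t ht
end

section
/- Let a > 0, ε > 0, f ∈ C²([0,1]), and suppose w : [0,1] × [0,∞) → ℝ is a C² function satisfying w_tt − a² w_xx − a² f''(x) + (1/ε) w_t = 0 on [0,1] × (0,∞) and w(0,t) = w(1,t) = 0 for all t ≥ 0. Then for all t > 0: (d/dt) ∫₀¹ ( w²/(2ε) + w w_t + w_t²/2 + (a²/2) w_x² )(x,t) dx + (1/ε − 3/2) ∫₀¹ w_t²(x,t) dx + (a²/2) ∫₀¹ w_x²(x,t) dx ≤ ∫₀¹ ( (a²/2)(f'(x))² + (a⁴/2)(f''(x))² ) dx. -/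
/-!
Put `u = w(·, t)`. Along a solution, the time derivative of the energy density is
`u u_t/ε + u_t² + (u + u_t) u_tt + a² u_x u_xt`. Eliminating `u_tt` with the equation and
integrating by parts three times (`u u_xx`, `u_t u_xx + u_x u_xt` and `u f''`) turns it into
`(1 - 1/ε) u_t² - a² u_x² - a² u_x f' + a² u_t f''` plus the `x`-derivative of
`a² (u u_x + u_x u_t + u f')`, which vanishes at `x = 0, 1` because `u` and `u_t` do.
Young's inequality on the two cross terms then leaves exactly the right-hand side.

Only `w` on the closed half-strip is given, so `px w` is meaningless at `x = 0, 1`. The proof uses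
instead the derivatives of `w` within the half-strip, which are continuous up to the boundary;
this gives the uniform bound needed to differentiate the energy under the integral sign.
-/

open Set Real

/-- Partial derivative with respect to the second (time) variable. -/
noncomputable def pt (u : ℝ → ℝ → ℝ) (x t : ℝ) : ℝ := deriv (u x) t

/-- Partial derivative with respect to the first (space) variable. -/
noncomputable def px (u : ℝ → ℝ → ℝ) (x t : ℝ) : ℝ := deriv (fun y => u y t) x

open Filter Topology MeasureTheory Function

section Calculus

variable {E F : Type*} [NormedAddCommGroup E] [NormedSpace ℝ E]
  [NormedAddCommGroup F] [NormedSpace ℝ F] {n m : WithTop ℕ∞}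

theorem ContDiffOn.hasFDerivAt_fderivWithin {f : E → F} {s : Set E} {x : E}
    (hf : ContDiffOn ℝ n f s) (hn : n ≠ 0) (hs : s ∈ 𝓝 x) :
    HasFDerivAt f (fderivWithin ℝ f s x) x :=
  ((hf.differentiableOn hn x (mem_of_mem_nhds hs)).hasFDerivWithinAt).hasFDerivAt hs

theorem ContDiffOn.deriv_eq_derivWithin {f : ℝ → F} {s : Set ℝ} {x : ℝ}
    (hf : ContDiffOn ℝ n f s) (hn : n ≠ 0) (hx : s ∈ 𝓝 x) : deriv f x = derivWithin f s x :=
  (hf.hasFDerivAt_fderivWithin hn hx).hasDerivAt.deriv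

theorem ContDiffOn.deriv_deriv_eq_derivWithin {f : ℝ → F} {s : Set ℝ} {x : ℝ}
    (hf : ContDiffOn ℝ 2 f s) (hs : UniqueDiffOn ℝ s) (hx : s ∈ 𝓝 x) :
    deriv (deriv f) x = derivWithin (derivWithin f s) s x := by
  have hderiv : deriv f =ᶠ[𝓝 x] derivWithin f s :=
    (eventually_mem_nhds_iff.2 hx).mono fun _ hy => hf.deriv_eq_derivWithin two_ne_zero hy
  rw [hderiv.deriv_eq]
  exact (hf.derivWithin hs (m := 1) le_rfl).deriv_eq_derivWithin one_ne_zero hx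

noncomputable def partialWithin (s : Set E) (v : E) (u : E → F) (p : E) : F :=
  fderivWithin ℝ u s p v

variable {s : Set E} {u : E → F} {p : E}

theorem ContDiffOn.contDiffOn_partialWithin (hu : ContDiffOn ℝ n u s) (hs : UniqueDiffOn ℝ s)
    (hmn : m + 1 ≤ n) (v : E) : ContDiffOn ℝ m (partialWithin s v u) s :=
  (hu.fderivWithin hs hmn).clm_apply contDiffOn_const

theorem ContDiffOn.continuousOn_partialWithin (hu : ContDiffOn ℝ n u s) (hs : UniqueDiffOn ℝ s)
    (hn : 1 ≤ n) (v : E) : ContinuousOn (partialWithin s v u) s :=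
  (hu.continuousOn_fderivWithin hs hn).clm_apply continuousOn_const

theorem partialWithin_comm (hu : ContDiffOn ℝ 2 u s) (hp : s ∈ 𝓝 p) (v w : E) :
    partialWithin s w (partialWithin s v u) p = partialWithin s v (partialWithin s w u) p := by
  have hu' : ContDiffAt ℝ 2 u p := hu.contDiffAt hp
  have hd : DifferentiableAt ℝ (fderiv ℝ u) p :=
    (hu'.fderiv_right (m := 1) le_rfl).differentiableAt one_ne_zero
  have key : ∀ v w : E,
      partialWithin s w (partialWithin s v u) p = fderiv ℝ (fderiv ℝ u) p w v := by
    intro v w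
    have hev : partialWithin s v u =ᶠ[𝓝 p] fun q => fderiv ℝ u q v := by
      filter_upwards [eventually_mem_nhds_iff.2 hp] with q hq
      rw [partialWithin, fderivWithin_of_mem_nhds hq]
    rw [partialWithin, fderivWithin_of_mem_nhds hp, hev.fderiv_eq,
      fderiv_clm_apply hd (differentiableAt_const v)]
    simp
  rw [key, key]
  exact (hu'.isSymmSndFDerivAt (by simp)) w v

end Calculus

section Slices

variable {F : Type*} [NormedAddCommGroup F] [NormedSpace ℝ F] {n : WithTop ℕ∞}
  {s : Set (ℝ × ℝ)} {u : ℝ × ℝ → F} {p : ℝ × ℝ}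

theorem ContDiffOn.hasDerivAt_partialWithin_fst (hu : ContDiffOn ℝ n u s) (hn : n ≠ 0)
    (hp : s ∈ 𝓝 p) : HasDerivAt (fun x => u (x, p.2)) (partialWithin s (1, 0) u p) p.1 :=
  (hu.hasFDerivAt_fderivWithin hn hp).comp_hasDerivAt p.1
    ((hasDerivAt_id _).prodMk (hasDerivAt_const _ _))

theorem ContDiffOn.hasDerivAt_partialWithin_snd (hu : ContDiffOn ℝ n u s) (hn : n ≠ 0)
    (hp : s ∈ 𝓝 p) : HasDerivAt (fun t => u (p.1, t)) (partialWithin s (0, 1) u p) p.2 :=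
  (hu.hasFDerivAt_fderivWithin hn hp).comp_hasDerivAt p.2
    ((hasDerivAt_const _ _).prodMk (hasDerivAt_id _))

theorem partialWithin_snd_eq_zero (hu : DifferentiableWithinAt ℝ u s p)
    (hzero : ∀ᶠ r in 𝓝 p.2, (p.1, r) ∈ s ∧ u (p.1, r) = 0) :
    partialWithin s (0, 1) u p = 0 := by
  have hline : HasDerivWithinAt (fun r => u (p.1, r)) (partialWithin s (0, 1) u p)
      {r | (p.1, r) ∈ s} p.2 :=
    hu.hasFDerivWithinAt.comp_hasDerivWithinAt (x := p.2)
      ((hasDerivAt_const _ _).prodMk (hasDerivAt_id _)).hasDerivWithinAt (fun _ hr => hr)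
  have hvanish : (fun r => u (p.1, r)) =ᶠ[𝓝 p.2] fun _ => 0 := hzero.mono fun _ hr => hr.2
  rw [← (hline.hasDerivAt (hzero.mono fun _ hr => hr.1)).deriv, hvanish.deriv_eq, deriv_const]

end Slices

section CurriedPartials

variable {n : WithTop ℕ∞} {s : Set (ℝ × ℝ)} {w : ℝ → ℝ → ℝ} {x t : ℝ}

theorem pt_eq_partialWithin (hw : ContDiffOn ℝ n (uncurry w) s) (hn : n ≠ 0)
    (hs : s ∈ 𝓝 (x, t)) : pt w x t = partialWithin s (0, 1) (uncurry w) (x, t) :=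
  (hw.hasDerivAt_partialWithin_snd hn hs).deriv

theorem px_eq_partialWithin (hw : ContDiffOn ℝ n (uncurry w) s) (hn : n ≠ 0)
    (hs : s ∈ 𝓝 (x, t)) : px w x t = partialWithin s (1, 0) (uncurry w) (x, t) :=
  (hw.hasDerivAt_partialWithin_fst hn hs).deriv

theorem pt_pt_eq_partialWithin (hw : ContDiffOn ℝ 2 (uncurry w) s) (hS : UniqueDiffOn ℝ s)
    (hs : s ∈ 𝓝 (x, t)) :
    pt (pt w) x t = partialWithin s (0, 1) (partialWithin s (0, 1) (uncurry w)) (x, t) := by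
  have hev : pt w x =ᶠ[𝓝 t] fun r => partialWithin s (0, 1) (uncurry w) (x, r) :=
    ((Continuous.prodMk_right x).tendsto t).eventually (eventually_mem_nhds_iff.2 hs)
      |>.mono fun _ hr => pt_eq_partialWithin hw two_ne_zero hr
  exact hev.deriv_eq.trans ((hw.contDiffOn_partialWithin hS (m := 1) le_rfl _)
    |>.hasDerivAt_partialWithin_snd one_ne_zero hs).deriv

theorem px_px_eq_partialWithin (hw : ContDiffOn ℝ 2 (uncurry w) s) (hS : UniqueDiffOn ℝ s)
    (hs : s ∈ 𝓝 (x, t)) :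
    px (px w) x t = partialWithin s (1, 0) (partialWithin s (1, 0) (uncurry w)) (x, t) := by
  have hev : (fun y => px w y t) =ᶠ[𝓝 x] fun y => partialWithin s (1, 0) (uncurry w) (y, t) :=
    ((Continuous.prodMk_left t).tendsto x).eventually (eventually_mem_nhds_iff.2 hs)
      |>.mono fun _ hy => px_eq_partialWithin hw two_ne_zero hy
  exact hev.deriv_eq.trans ((hw.contDiffOn_partialWithin hS (m := 1) le_rfl _)
    |>.hasDerivAt_partialWithin_fst one_ne_zero hs).deriv

end CurriedPartials

theorem hasDerivAt_integral_of_continuousOn {g g' : ℝ × ℝ → ℝ} {a b t δ : ℝ} (hab : a ≤ b)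
    (hδ : 0 < δ) (hg : ContinuousOn g (Icc a b ×ˢ Icc (t - δ) (t + δ)))
    (hg' : ContinuousOn g' (Icc a b ×ˢ Icc (t - δ) (t + δ)))
    (hderiv : ∀ x ∈ Ioo a b, ∀ s ∈ Ioo (t - δ) (t + δ),
      HasDerivAt (fun r => g (x, r)) (g' (x, s)) s) :
    HasDerivAt (fun s => ∫ x in a..b, g (x, s)) (∫ x in a..b, g' (x, t)) t := by
  have hslice : ∀ {h : ℝ × ℝ → ℝ}, ContinuousOn h (Icc a b ×ˢ Icc (t - δ) (t + δ)) →
      ∀ s ∈ Icc (t - δ) (t + δ), IntervalIntegrable (fun x => h (x, s)) volume a b :=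
    fun hh s hs => (hh.uncurry_right (f := curry _) s hs).intervalIntegrable_of_Icc hab
  have ht : t ∈ Icc (t - δ) (t + δ) := ⟨by linarith, by linarith⟩
  obtain ⟨C, hC⟩ := (isCompact_Icc.prod isCompact_Icc).exists_bound_of_continuousOn hg'
  have hne : ∀ᵐ x ∂volume, x ≠ b := compl_mem_ae_iff.2 (measure_singleton b)
  refine (intervalIntegral.hasDerivAt_integral_of_dominated_loc_of_deriv_le
    (F := fun s x => g (x, s)) (F' := fun s x => g' (x, s)) (bound := fun _ => C)
    (Ioo_mem_nhds (show t - δ < t by linarith) (show t < t + δ by linarith)) ?_ (hslice hg t ht)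
    (hslice hg' t ht).aestronglyMeasurable_restrict_uIoc ?_ intervalIntegrable_const ?_).2
  · filter_upwards [Ioo_mem_nhds (show t - δ < t by linarith) (show t < t + δ by linarith)]
      with s hs
    exact (hslice hg s (Ioo_subset_Icc_self hs)).aestronglyMeasurable_restrict_uIoc
  · refine Eventually.of_forall fun x hx s hs => hC _ ⟨?_, Ioo_subset_Icc_self hs⟩
    rw [uIoc_of_le hab] at hx
    exact Ioc_subset_Icc_self hx
  · filter_upwards [hne] with x hxb hx s hs
    rw [uIoc_of_le hab] at hx
    exact hderiv x ⟨hx.1, lt_of_le_of_ne hx.2 hxb⟩ s hs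

section Energy

variable (c ε : ℝ)

noncomputable def energyDensity (w wt wx : ℝ) : ℝ :=
  w ^ 2 / (2 * ε) + w * wt + wt ^ 2 / 2 + c ^ 2 / 2 * wx ^ 2

noncomputable def energyRate (w wt wx wtt wxt : ℝ) : ℝ :=
  w * wt / ε + wt ^ 2 + (w + wt) * wtt + c ^ 2 * (wx * wxt)

variable {c ε}

theorem HasDerivAt.energyDensity {w wt wx : ℝ → ℝ} {wtt wxt s : ℝ}
    (hw : HasDerivAt w (wt s) s) (hwt : HasDerivAt wt wtt s) (hwx : HasDerivAt wx wxt s) :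
    HasDerivAt (fun r => energyDensity c ε (w r) (wt r) (wx r))
      (energyRate c ε (w s) (wt s) (wx s) wtt wxt) s := by
  refine ((((hw.pow 2).div_const (2 * ε)).add (hw.mul hwt)).add ((hwt.pow 2).div_const 2)).add
    ((hwx.pow 2).const_mul (c ^ 2 / 2)) |>.congr_deriv ?_
  unfold energyRate
  ring

/-- The last term is `c²` times the `x`-derivative of `w w_x + w_x w_t + w f₁`; the two squares
completed in the proof are Young's inequality for the cross terms `w_x f₁` and `w_t f₂`. -/
theorem energyRate_add_le {w wt wx wtt wxt wxx f₁ f₂ : ℝ}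
    (hpde : wtt - c ^ 2 * wxx - c ^ 2 * f₂ + 1 / ε * wt = 0) :
    energyRate c ε w wt wx wtt wxt + (1 / ε - 3 / 2) * wt ^ 2 + c ^ 2 / 2 * wx ^ 2
      ≤ c ^ 2 / 2 * f₁ ^ 2 + c ^ 4 / 2 * f₂ ^ 2
        + c ^ 2 * (wx * wx + w * wxx + ((wxx * wt + wx * wxt) + (wx * f₁ + w * f₂))) := by
  unfold energyRate
  linear_combination (w + wt) * hpde + sq_nonneg (wt - c ^ 2 * f₂) / 2
    + sq_nonneg (c * (wx + f₁)) / 2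

end Energy

theorem integral_energyRate_add_le {a b c ε : ℝ} (hab : a ≤ b)
    {u ut ux uxx uxt utt f₁ f₂ : ℝ → ℝ}
    (hu : ContinuousOn u (Icc a b)) (hut : ContinuousOn ut (Icc a b))
    (hux : ContinuousOn ux (Icc a b)) (huxx : ContinuousOn uxx (Icc a b))
    (huxt : ContinuousOn uxt (Icc a b)) (hutt : ContinuousOn utt (Icc a b))
    (hf₁ : ContinuousOn f₁ (Icc a b)) (hf₂ : ContinuousOn f₂ (Icc a b))
    (hu' : ∀ x ∈ Ioo a b, HasDerivAt u (ux x) x) (hux' : ∀ x ∈ Ioo a b, HasDerivAt ux (uxx x) x)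
    (hut' : ∀ x ∈ Ioo a b, HasDerivAt ut (uxt x) x) (hf₁' : ∀ x ∈ Ioo a b, HasDerivAt f₁ (f₂ x) x)
    (hua : u a = 0) (hub : u b = 0) (huta : ut a = 0) (hutb : ut b = 0)
    (hpde : ∀ x ∈ Ioo a b, utt x - c ^ 2 * uxx x - c ^ 2 * f₂ x + 1 / ε * ut x = 0) :
    (∫ x in a..b, energyRate c ε (u x) (ut x) (ux x) (utt x) (uxt x))
        + (1 / ε - 3 / 2) * (∫ x in a..b, ut x ^ 2)
        + c ^ 2 / 2 * (∫ x in a..b, ux x ^ 2)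
      ≤ ∫ x in a..b, (c ^ 2 / 2 * f₁ x ^ 2 + c ^ 4 / 2 * f₂ x ^ 2) := by
  have hint : ∀ {g : ℝ → ℝ}, ContinuousOn g (Icc a b) → IntervalIntegrable g volume a b :=
    fun hg => hg.intervalIntegrable_of_Icc hab
  have hrate : ContinuousOn (fun x => energyRate c ε (u x) (ut x) (ux x) (utt x) (uxt x))
      (Icc a b) := by
    unfold energyRate
    fun_prop
  set fluxDeriv : ℝ → ℝ := fun x =>
    ux x * ux x + u x * uxx x + ((uxx x * ut x + ux x * uxt x) + (ux x * f₁ x + u x * f₂ x))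
  have hflux : ∫ x in a..b, fluxDeriv x = 0 := by
    rw [intervalIntegral.integral_eq_sub_of_hasDerivAt_of_le hab
      (f := fun x => u x * ux x + (ux x * ut x + u x * f₁ x)) (by fun_prop)
      (fun x hx => ((hu' x hx).mul (hux' x hx)).add (((hux' x hx).mul (hut' x hx)).add
        ((hu' x hx).mul (hf₁' x hx)))) (hint (by fun_prop))]
    simp [hua, hub, huta, hutb]
  calc _ = ∫ x in a..b, (energyRate c ε (u x) (ut x) (ux x) (utt x) (uxt x)
          + (1 / ε - 3 / 2) * ut x ^ 2 + c ^ 2 / 2 * ux x ^ 2) := by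
        rw [intervalIntegral.integral_add (hint (by fun_prop)) (hint (by fun_prop)),
          intervalIntegral.integral_add (hint hrate) (hint (by fun_prop)),
          intervalIntegral.integral_const_mul, intervalIntegral.integral_const_mul]
    _ ≤ ∫ x in a..b, (c ^ 2 / 2 * f₁ x ^ 2 + c ^ 4 / 2 * f₂ x ^ 2 + c ^ 2 * fluxDeriv x) :=
        intervalIntegral.integral_mono_on_of_le_Ioo hab (hint (by fun_prop)) (hint (by fun_prop))
          fun x hx => energyRate_add_le (hpde x hx)
    _ = _ := by
        rw [intervalIntegral.integral_add (hint (by fun_prop)) (hint (by fun_prop)),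
          intervalIntegral.integral_const_mul, hflux, mul_zero, add_zero]

def halfStrip (a b : ℝ) : Set (ℝ × ℝ) := Icc a b ×ˢ Ici 0

section Strip

variable {a b c ε t : ℝ} {W : ℝ × ℝ → ℝ}

local notation "∂ₓ" => partialWithin (halfStrip a b) ((1 : ℝ), (0 : ℝ))
local notation "∂ₜ" => partialWithin (halfStrip a b) ((0 : ℝ), (1 : ℝ))

theorem uniqueDiffOn_halfStrip (hab : a < b) : UniqueDiffOn ℝ (halfStrip a b) :=
  (uniqueDiffOn_Icc hab).prod (uniqueDiffOn_Ici 0)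

theorem halfStrip_mem_nhds {x : ℝ} (hx : x ∈ Ioo a b) (ht : 0 < t) :
    halfStrip a b ∈ 𝓝 (x, t) :=
  prod_mem_nhds (Icc_mem_nhds hx.1 hx.2) (Ici_mem_nhds ht)

theorem hasDerivAt_integral_energyDensity (hab : a < b) (ht : 0 < t)
    (hW : ContDiffOn ℝ 2 W (halfStrip a b)) :
    HasDerivAt (fun s => ∫ x in a..b, energyDensity c ε (W (x, s)) (∂ₜ W (x, s)) (∂ₓ W (x, s)))
      (∫ x in a..b, energyRate c ε (W (x, t)) (∂ₜ W (x, t)) (∂ₓ W (x, t))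
        (∂ₜ (∂ₜ W) (x, t)) (∂ₜ (∂ₓ W) (x, t))) t := by
  have hS := uniqueDiffOn_halfStrip hab
  have hK : Icc a b ×ˢ Icc (t - t / 2) (t + t / 2) ⊆ halfStrip a b :=
    prod_mono_right fun s hs => by simp only [mem_Ici]; linarith [hs.1]
  have hWx := hW.contDiffOn_partialWithin hS (m := 1) le_rfl (1, 0)
  have hWt := hW.contDiffOn_partialWithin hS (m := 1) le_rfl (0, 1)
  have hW₀ := hW.continuousOn.mono hK
  have hWx₀ := hWx.continuousOn.mono hK
  have hWt₀ := hWt.continuousOn.mono hK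
  have hWxt₀ := (hWx.continuousOn_partialWithin hS le_rfl (0, 1)).mono hK
  have hWtt₀ := (hWt.continuousOn_partialWithin hS le_rfl (0, 1)).mono hK
  refine hasDerivAt_integral_of_continuousOn (t := t) hab.le (half_pos ht)
    (g := fun p => energyDensity c ε (W p) (∂ₜ W p) (∂ₓ W p))
    (g' := fun p => energyRate c ε (W p) (∂ₜ W p) (∂ₓ W p) (∂ₜ (∂ₜ W) p) (∂ₜ (∂ₓ W) p))
    (by unfold energyDensity; fun_prop) (by unfold energyRate; fun_prop) fun x hx s hs => ?_
  have hxs := halfStrip_mem_nhds hx (show 0 < s by linarith [hs.1])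
  exact HasDerivAt.energyDensity (hW.hasDerivAt_partialWithin_snd two_ne_zero hxs)
    (hWt.hasDerivAt_partialWithin_snd one_ne_zero hxs)
    (hWx.hasDerivAt_partialWithin_snd one_ne_zero hxs)

theorem deriv_integral_energyDensity_add_le (hab : a < b) (ht : 0 < t)
    (hW : ContDiffOn ℝ 2 W (halfStrip a b)) {f₁ f₂ : ℝ → ℝ}
    (hf₁ : ContinuousOn f₁ (Icc a b)) (hf₂ : ContinuousOn f₂ (Icc a b))
    (hf₁' : ∀ x ∈ Ioo a b, HasDerivAt f₁ (f₂ x) x)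
    (hbc : ∀ s, 0 ≤ s → W (a, s) = 0 ∧ W (b, s) = 0)
    (hpde : ∀ x ∈ Ioo a b, ∂ₜ (∂ₜ W) (x, t) - c ^ 2 * ∂ₓ (∂ₓ W) (x, t) - c ^ 2 * f₂ x
      + 1 / ε * ∂ₜ W (x, t) = 0) :
    deriv (fun s => ∫ x in a..b, energyDensity c ε (W (x, s)) (∂ₜ W (x, s)) (∂ₓ W (x, s))) t
        + (1 / ε - 3 / 2) * (∫ x in a..b, ∂ₜ W (x, t) ^ 2)
        + c ^ 2 / 2 * (∫ x in a..b, ∂ₓ W (x, t) ^ 2)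
      ≤ ∫ x in a..b, (c ^ 2 / 2 * f₁ x ^ 2 + c ^ 4 / 2 * f₂ x ^ 2) := by
  have hS := uniqueDiffOn_halfStrip hab
  have hWx := hW.contDiffOn_partialWithin hS (m := 1) le_rfl (1, 0)
  have hWt := hW.contDiffOn_partialWithin hS (m := 1) le_rfl (0, 1)
  have hslice : ∀ {g : ℝ × ℝ → ℝ}, ContinuousOn g (halfStrip a b) →
      ContinuousOn (fun x => g (x, t)) (Icc a b) :=
    fun hg => hg.comp (by fun_prop) fun x hx => ⟨hx, ht.le⟩
  have hWt_boundary : ∀ x ∈ Icc a b, (∀ s, 0 ≤ s → W (x, s) = 0) → ∂ₜ W (x, t) = 0 :=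
    fun x hx hzero => partialWithin_snd_eq_zero (hW.differentiableOn two_ne_zero _ ⟨hx, ht.le⟩)
      (by filter_upwards [Ici_mem_nhds ht] with s hs; exact ⟨⟨hx, hs⟩, hzero s hs⟩)
  rw [(hasDerivAt_integral_energyDensity hab ht hW).deriv]
  refine integral_energyRate_add_le hab.le (hslice hW.continuousOn) (hslice hWt.continuousOn)
    (hslice hWx.continuousOn) (hslice (hWx.continuousOn_partialWithin hS le_rfl _))
    (hslice (hWx.continuousOn_partialWithin hS le_rfl _))
    (hslice (hWt.continuousOn_partialWithin hS le_rfl _)) hf₁ hf₂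
    (fun x hx => hW.hasDerivAt_partialWithin_fst two_ne_zero (halfStrip_mem_nhds hx ht))
    (fun x hx => hWx.hasDerivAt_partialWithin_fst one_ne_zero (halfStrip_mem_nhds hx ht))
    (fun x hx => ?_) hf₁' (hbc t ht.le).1 (hbc t ht.le).2
    (hWt_boundary a (left_mem_Icc.2 hab.le) fun s hs => (hbc s hs).1)
    (hWt_boundary b (right_mem_Icc.2 hab.le) fun s hs => (hbc s hs).2) hpde
  rw [← partialWithin_comm hW (halfStrip_mem_nhds hx ht)]
  exact hWt.hasDerivAt_partialWithin_fst one_ne_zero (halfStrip_mem_nhds hx ht)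

theorem deriv_integral_energyDensity_pt_px_add_le {w : ℝ → ℝ → ℝ} (hab : a < b) (ht : 0 < t)
    (hw : ContDiffOn ℝ 2 (uncurry w) (halfStrip a b)) {f₁ f₂ : ℝ → ℝ}
    (hf₁ : ContinuousOn f₁ (Icc a b)) (hf₂ : ContinuousOn f₂ (Icc a b))
    (hf₁' : ∀ x ∈ Ioo a b, HasDerivAt f₁ (f₂ x) x)
    (hbc : ∀ s, 0 ≤ s → w a s = 0 ∧ w b s = 0)
    (hpde : ∀ x ∈ Ioo a b,
      pt (pt w) x t - c ^ 2 * px (px w) x t - c ^ 2 * f₂ x + 1 / ε * pt w x t = 0) :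
    deriv (fun s => ∫ x in a..b, energyDensity c ε (w x s) (pt w x s) (px w x s)) t
        + (1 / ε - 3 / 2) * (∫ x in a..b, pt w x t ^ 2)
        + c ^ 2 / 2 * (∫ x in a..b, px w x t ^ 2)
      ≤ ∫ x in a..b, (c ^ 2 / 2 * f₁ x ^ 2 + c ^ 4 / 2 * f₂ x ^ 2) := by
  have hpt : ∀ x ∈ Ioo a b, ∀ s, 0 < s → pt w x s = ∂ₜ (uncurry w) (x, s) :=
    fun x hx s hs => pt_eq_partialWithin hw two_ne_zero (halfStrip_mem_nhds hx hs)
  have hpx : ∀ x ∈ Ioo a b, ∀ s, 0 < s → px w x s = ∂ₓ (uncurry w) (x, s) :=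
    fun x hx s hs => px_eq_partialWithin hw two_ne_zero (halfStrip_mem_nhds hx hs)
  have henergy : (fun s => ∫ x in a..b, energyDensity c ε (w x s) (pt w x s) (px w x s))
      =ᶠ[𝓝 t] fun s => ∫ x in a..b,
        energyDensity c ε (uncurry w (x, s)) (∂ₜ (uncurry w) (x, s)) (∂ₓ (uncurry w) (x, s)) := by
    filter_upwards [Ioi_mem_nhds ht] with s hs
    exact intervalIntegral.integral_congr_Ioo_of_le hab.le fun x hx => by
      rw [hpt x hx s hs, hpx x hx s hs, uncurry_apply_pair]
  have hpt_sq : ∫ x in a..b, pt w x t ^ 2 = ∫ x in a..b, ∂ₜ (uncurry w) (x, t) ^ 2 :=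
    intervalIntegral.integral_congr_Ioo_of_le hab.le fun x hx => by rw [hpt x hx t ht]
  have hpx_sq : ∫ x in a..b, px w x t ^ 2 = ∫ x in a..b, ∂ₓ (uncurry w) (x, t) ^ 2 :=
    intervalIntegral.integral_congr_Ioo_of_le hab.le fun x hx => by rw [hpx x hx t ht]
  rw [henergy.deriv_eq, hpt_sq, hpx_sq]
  refine deriv_integral_energyDensity_add_le hab ht hw hf₁ hf₂ hf₁' hbc fun x hx => ?_
  have hxt := halfStrip_mem_nhds hx ht
  have hpde_xt := hpde x hx
  rwa [pt_pt_eq_partialWithin hw (uniqueDiffOn_halfStrip hab) hxt,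
    px_px_eq_partialWithin hw (uniqueDiffOn_halfStrip hab) hxt, hpt x hx t ht] at hpde_xt

end Strip

theorem energy_differential_inequality_general
    (a ε : ℝ)
    (f : ℝ → ℝ) (hf : ContDiffOn ℝ 2 f (Icc 0 1))
    (w : ℝ → ℝ → ℝ)
    (hw : ContDiffOn ℝ 2 (fun p : ℝ × ℝ => w p.1 p.2) (Icc 0 1 ×ˢ Ici 0))
    (hpde : ∀ x ∈ Icc (0:ℝ) 1, ∀ t : ℝ, 0 < t →
      pt (pt w) x t - a ^ 2 * px (px w) x t - a ^ 2 * deriv (deriv f) x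
        + (1 / ε) * pt w x t = 0)
    (hbc : ∀ t : ℝ, 0 ≤ t → w 0 t = 0 ∧ w 1 t = 0) :
    ∀ t : ℝ, 0 < t →
      deriv (fun s => ∫ x in (0:ℝ)..1,
          ((w x s) ^ 2 / (2 * ε) + w x s * pt w x s + (pt w x s) ^ 2 / 2
            + a ^ 2 / 2 * (px w x s) ^ 2)) t
        + (1 / ε - 3 / 2) * (∫ x in (0:ℝ)..1, (pt w x t) ^ 2)
        + a ^ 2 / 2 * (∫ x in (0:ℝ)..1, (px w x t) ^ 2)
      ≤ ∫ x in (0:ℝ)..1,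
          (a ^ 2 / 2 * (deriv f x) ^ 2 + a ^ 4 / 2 * (deriv (deriv f) x) ^ 2) := by
  intro t ht
  have hI : UniqueDiffOn ℝ (Icc (0 : ℝ) 1) := uniqueDiffOn_Icc zero_lt_one
  have hf₁ : ContDiffOn ℝ 1 (derivWithin f (Icc 0 1)) (Icc 0 1) := hf.derivWithin hI le_rfl
  have hf'' : ∀ x ∈ Ioo (0 : ℝ) 1,
      deriv (deriv f) x = derivWithin (derivWithin f (Icc 0 1)) (Icc 0 1) x :=
    fun x hx => hf.deriv_deriv_eq_derivWithin hI (Icc_mem_nhds hx.1 hx.2)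
  have hf_sq : ∫ x in (0:ℝ)..1, (a ^ 2 / 2 * (deriv f x) ^ 2 + a ^ 4 / 2 * (deriv (deriv f) x) ^ 2)
      = ∫ x in (0:ℝ)..1, (a ^ 2 / 2 * derivWithin f (Icc 0 1) x ^ 2
          + a ^ 4 / 2 * derivWithin (derivWithin f (Icc 0 1)) (Icc 0 1) x ^ 2) :=
    intervalIntegral.integral_congr_Ioo_of_le zero_le_one fun x hx => by
      rw [hf.deriv_eq_derivWithin two_ne_zero (Icc_mem_nhds hx.1 hx.2), hf'' x hx]
  rw [hf_sq]
  exact deriv_integral_energyDensity_pt_px_add_le zero_lt_one ht hw hf₁.continuousOn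
    (hf₁.continuousOn_derivWithin hI le_rfl)
    (fun x hx => (hf₁.hasFDerivAt_fderivWithin one_ne_zero (Icc_mem_nhds hx.1 hx.2)).hasDerivAt)
    hbc fun x hx => hf'' x hx ▸ hpde x (Ioo_subset_Icc_self hx) t ht

/-- Energy differential inequality for the case `b = 0`: if `w` is a C² solution of
`w_tt − a²w_xx − a²f'' + (1/ε)w_t = 0` on `[0,1] × (0,∞)` with `w(0,t) = w(1,t) = 0`, then
for all `t > 0`:
`(d/dt)∫₀¹ (w²/(2ε) + w w_t + w_t²/2 + (a²/2)w_x²) dx + (1/ε − 3/2)∫₀¹ w_t² dx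
  + (a²/2)∫₀¹ w_x² dx ≤ ∫₀¹ ((a²/2)f'² + (a⁴/2)f''²) dx`. -/
theorem energy_differential_inequality
    (a ε : ℝ) (ha : 0 < a) (hε : 0 < ε)
    (f : ℝ → ℝ) (hf : ContDiffOn ℝ 2 f (Icc 0 1))
    (w : ℝ → ℝ → ℝ)
    (hw : ContDiffOn ℝ 2 (fun p : ℝ × ℝ => w p.1 p.2) (Icc 0 1 ×ˢ Ici 0))
    (hpde : ∀ x ∈ Icc (0:ℝ) 1, ∀ t : ℝ, 0 < t →
      pt (pt w) x t - a ^ 2 * px (px w) x t - a ^ 2 * deriv (deriv f) x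
        + (1 / ε) * pt w x t = 0)
    (hbc : ∀ t : ℝ, 0 ≤ t → w 0 t = 0 ∧ w 1 t = 0) :
    ∀ t : ℝ, 0 < t →
      deriv (fun s => ∫ x in (0:ℝ)..1,
          ((w x s) ^ 2 / (2 * ε) + w x s * pt w x s + (pt w x s) ^ 2 / 2
            + a ^ 2 / 2 * (px w x s) ^ 2)) t
        + (1 / ε - 3 / 2) * (∫ x in (0:ℝ)..1, (pt w x t) ^ 2)
        + a ^ 2 / 2 * (∫ x in (0:ℝ)..1, (px w x t) ^ 2)
      ≤ ∫ x in (0:ℝ)..1,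
          (a ^ 2 / 2 * (deriv f x) ^ 2 + a ^ 4 / 2 * (deriv (deriv f) x) ^ 2) :=
  energy_differential_inequality_general a ε f hf w hw hpde hbc
end

section
/- Let −1 < b < 0, let c : ℝ → ℝ be C¹, and for ε > 0 let d(t) = [ b c(t) e^{b/ε}/ε + c'(t)( (1/ε − 1/b) e^{b/ε} + 1/b ) ] / (1 − e^{b/ε}), U₀(y,t) = c(t) e^{b y}, and U₁(y,t) = (c'(t)/b)[ (y − 1/b) e^{b y} + 1/b ] + (d(t)/b)(e^{b y} − 1). Then for each fixed t ≥ 0 there exist constants C₀, C₁ > 0 independent of ε such that for all sufficiently small ε > 0: ∫₀¹ U₀(x/ε, t)² dx ≤ C₀ ε and ∫₀¹ ε² U₁(x/ε, t)² dx ≤ C₁ ε². -/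
open Set Real

private lemma aux_yexp (b : ℝ) (hb : b < 0) (y : ℝ) : y * Real.exp (b*y) ≤ (-b)⁻¹ := by
  have h1 : -(b*y) ≤ Real.exp (-(b*y)) := le_trans (by linarith) (Real.add_one_le_exp _)
  have h2 : (0:ℝ) < Real.exp (b*y) := Real.exp_pos _
  have h3 : (-(b*y)) * Real.exp (b*y) ≤ 1 := by
    have := mul_le_mul_of_nonneg_right h1 h2.le
    rwa [← Real.exp_add, neg_add_cancel, Real.exp_zero] at this
  have hnb : (0:ℝ) < -b := by linarith
  have hKpos : (0:ℝ) < (-b)⁻¹ := by positivity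
  have h4 : (-b) * (y * Real.exp (b*y)) ≤ 1 := by nlinarith
  calc y * Real.exp (b*y) = (-b)⁻¹ * ((-b) * (y * Real.exp (b*y))) :=
        (inv_mul_cancel_left₀ (by linarith) _).symm
    _ ≤ (-b)⁻¹ * 1 := by nlinarith
    _ = (-b)⁻¹ := mul_one _

set_option maxHeartbeats 1000000 in
/-- L² bounds for the boundary layer profiles (`−1 < b < 0`): for each fixed `t ≥ 0` there
are constants `C₀, C₁ > 0` independent of `ε` such that, for all sufficiently small `ε > 0`,
`∫₀¹ U₀(x/ε,t)² dx ≤ C₀ ε` and `∫₀¹ ε² U₁(x/ε,t)² dx ≤ C₁ ε²`, where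
`U₀(y,t) = c(t)e^{by}`, `U₁(y,t) = (c'(t)/b)[(y − 1/b)e^{by} + 1/b] + (d(t)/b)(e^{by} − 1)`
and `d(t) = [b c(t)e^{b/ε}/ε + c'(t)((1/ε − 1/b)e^{b/ε} + 1/b)]/(1 − e^{b/ε})`. -/
theorem boundary_layer_L2_bounds
    (b : ℝ) (hb1 : -1 < b) (hb0 : b < 0)
    (c : ℝ → ℝ) (hc : ContDiff ℝ 1 c) (t : ℝ) (ht : 0 ≤ t) :
    ∃ C₀ > (0:ℝ), ∃ C₁ > (0:ℝ), ∃ ε₁ > (0:ℝ), ∀ ε : ℝ, 0 < ε → ε < ε₁ →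
      (∫ x in (0:ℝ)..1, (c t * Real.exp (b * (x / ε))) ^ 2) ≤ C₀ * ε
      ∧ (∫ x in (0:ℝ)..1, ε ^ 2 *
            ((deriv c t / b) * ((x / ε - 1 / b) * Real.exp (b * (x / ε)) + 1 / b)
              + (((b * c t * Real.exp (b / ε) / ε
                    + deriv c t * ((1 / ε - 1 / b) * Real.exp (b / ε) + 1 / b))
                  / (1 - Real.exp (b / ε))) / b)
                * (Real.exp (b * (x / ε)) - 1)) ^ 2)
          ≤ C₁ * ε ^ 2 := by
  set K : ℝ := (-b)⁻¹ with hK_def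
  have hnb : (0:ℝ) < -b := by linarith
  have hKpos : (0:ℝ) < K := by positivity
  have hbK : (-b) * K = 1 := mul_inv_cancel₀ (by linarith)
  have h1b : (1:ℝ)/b = -K := by rw [hK_def]; field_simp
  set δ : ℝ := 1 - Real.exp b with hδ_def
  have hδpos : (0:ℝ) < δ := by
    have := Real.exp_lt_one_iff.mpr hb0  -- check name
    linarith
  set Mc : ℝ := |c t| with hMc_def
  set Md : ℝ := |deriv c t| with hMd_def
  have hMc0 : 0 ≤ Mc := abs_nonneg _
  have hMd0 : 0 ≤ Md := abs_nonneg _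
  set M : ℝ := 3*K^2*Md + K*((Mc + 3*K*Md)/δ) with hM_def
  have hM0 : 0 ≤ M := by positivity
  -- general inner bound
  have hinner : ∀ y : ℝ, 0 ≤ y → |(y - 1/b) * Real.exp (b*y) + 1/b| ≤ 3*K := by
    intro y hy
    have hE1 : Real.exp (b*y) ≤ 1 := by
      rw [← Real.exp_zero]; exact Real.exp_le_exp.mpr (by nlinarith)
    have hE0 : (0:ℝ) < Real.exp (b*y) := Real.exp_pos _
    have hye : y * Real.exp (b*y) ≤ K := aux_yexp b hb0 y
    rw [h1b, abs_le]
    constructor <;> nlinarith [mul_nonneg hy hE0.le, mul_le_mul_of_nonneg_left hE1 hKpos.le]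
  refine ⟨(c t)^2 * K / 2 + 1, by positivity, M^2 + 1, by positivity, 1, one_pos, ?_⟩
  intro ε hε hε1
  have hεne : ε ≠ 0 := ne_of_gt hε
  constructor
  · -- first bound
    set k : ℝ := b/ε*2 with hk_def
    have hkneg : k < 0 := by
      have : b/ε < 0 := div_neg_of_neg_of_pos hb0 hε
      rw [hk_def]; linarith
    have hkne : k ≠ 0 := ne_of_lt hkneg
    have hval : (∫ x in (0:ℝ)..1, (c t * Real.exp (b * (x / ε))) ^ 2)
        = (c t)^2 * (k⁻¹ * (Real.exp k - 1)) := by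
      have h1 : ∀ x : ℝ, (c t * Real.exp (b * (x / ε))) ^ 2
          = (c t)^2 * Real.exp (k * x) := by
        intro x
        rw [mul_pow, ← Real.exp_nat_mul, hk_def]
        ring_nf
      simp_rw [h1]
      rw [intervalIntegral.integral_const_mul,
        intervalIntegral.integral_comp_mul_left (fun x => Real.exp x) hkne]
      simp [integral_exp]
    rw [hval]
    have hek : Real.exp k < 1 := Real.exp_lt_one_iff.mpr hkneg
    have hek0 : (0:ℝ) < Real.exp k := Real.exp_pos _
    have hnk : (0:ℝ) < -k := by linarith
    have hinv : (-k)⁻¹ = ε * K / 2 := by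
      rw [hk_def, hK_def]
      field_simp
    have key : k⁻¹ * (Real.exp k - 1) ≤ ε * K / 2 := by
      rw [show k⁻¹ * (Real.exp k - 1) = (1 - Real.exp k) * (-k)⁻¹ by
        rw [← neg_inv]; ring, hinv]
      nlinarith [mul_pos hek0 (mul_pos hε hKpos)]
    nlinarith [sq_nonneg (c t), mul_le_mul_of_nonneg_left key (sq_nonneg (c t))]
  · -- second bound
    -- facts for ε ∈ (0,1)
    have hbε : b/ε ≤ b := by
      rw [div_le_iff₀ hε]; nlinarith
    have hden : δ ≤ 1 - Real.exp (b/ε) := by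
      have := Real.exp_le_exp.mpr hbε
      rw [hδ_def]; linarith
    have hdenpos : (0:ℝ) < 1 - Real.exp (b/ε) := lt_of_lt_of_le hδpos hden
    have hEε0 : (0:ℝ) < Real.exp (b/ε) := Real.exp_pos _
    have hEε1 : Real.exp (b/ε) ≤ 1 := by
      rw [← Real.exp_zero]; exact Real.exp_le_exp.mpr (by linarith)
    have hA : Real.exp (b/ε) / ε ≤ K := by
      have := aux_yexp b hb0 (1/ε)
      rw [mul_one_div] at this
      calc Real.exp (b/ε) / ε = (1/ε) * Real.exp (b/ε) := by ring
        _ ≤ K := this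
    have hA0 : (0:ℝ) ≤ Real.exp (b/ε) / ε := by positivity
    -- bound on numerator N
    set N : ℝ := b * c t * Real.exp (b / ε) / ε
        + deriv c t * ((1 / ε - 1 / b) * Real.exp (b / ε) + 1 / b) with hN_def
    have hN : |N| ≤ Mc + 3*K*Md := by
      have h1 : |b * c t * Real.exp (b / ε) / ε| = Mc * ((-b) * (Real.exp (b/ε) / ε)) := by
        rw [abs_div, abs_mul, abs_mul, abs_of_pos hEε0, abs_of_pos hε, abs_of_neg hb0,
          hMc_def]
        ring
      have h2 : Mc * ((-b) * (Real.exp (b/ε) / ε)) ≤ Mc := by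
        have : (-b) * (Real.exp (b/ε) / ε) ≤ 1 := by
          calc (-b) * (Real.exp (b/ε) / ε) ≤ (-b) * K :=
                mul_le_mul_of_nonneg_left hA hnb.le
            _ = 1 := hbK
        nlinarith
      have h3 : |(1 / ε - 1 / b) * Real.exp (b / ε) + 1 / b| ≤ 3*K := by
        have := hinner (1/ε) (by positivity)
        rwa [mul_one_div] at this
      calc |N| ≤ |b * c t * Real.exp (b / ε) / ε|
            + |deriv c t * ((1 / ε - 1 / b) * Real.exp (b / ε) + 1 / b)| := abs_add_le _ _
        _ ≤ Mc + Md * (3*K) := by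
            rw [abs_mul, h1]
            exact add_le_add h2 (mul_le_mul_of_nonneg_left h3 hMd0)
        _ = Mc + 3*K*Md := by ring
    set D : ℝ := N / (1 - Real.exp (b/ε)) with hD_def
    have hD : |D| ≤ (Mc + 3*K*Md)/δ := by
      rw [hD_def, abs_div, abs_of_pos hdenpos]
      exact div_le_div₀ (by positivity) hN hδpos hden
    -- pointwise bound of U₁
    have hU : ∀ x : ℝ, x ∈ Icc (0:ℝ) 1 →
        |(deriv c t / b) * ((x / ε - 1 / b) * Real.exp (b * (x / ε)) + 1 / b)
          + (D / b) * (Real.exp (b * (x / ε)) - 1)| ≤ M := by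
      intro x hx
      have hy0 : 0 ≤ x/ε := div_nonneg hx.1 hε.le
      have hE1 : Real.exp (b*(x/ε)) ≤ 1 := by
        rw [← Real.exp_zero]; exact Real.exp_le_exp.mpr (by nlinarith)
      have hE0 : (0:ℝ) < Real.exp (b*(x/ε)) := Real.exp_pos _
      have hEm1 : |Real.exp (b*(x/ε)) - 1| ≤ 1 := by
        rw [abs_le]; constructor <;> nlinarith
      have habsb : |deriv c t / b| = Md * K := by
        rw [abs_div, abs_of_neg hb0, hMd_def, hK_def]
        rw [div_eq_mul_inv]
      have habsD : |D / b| ≤ ((Mc + 3*K*Md)/δ) * K := by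
        rw [abs_div, abs_of_neg hb0, div_eq_mul_inv, ← hK_def]
        exact mul_le_mul_of_nonneg_right hD hKpos.le
      calc |(deriv c t / b) * ((x / ε - 1 / b) * Real.exp (b * (x / ε)) + 1 / b)
            + (D / b) * (Real.exp (b * (x / ε)) - 1)|
          ≤ |deriv c t / b| * |(x / ε - 1 / b) * Real.exp (b * (x / ε)) + 1 / b|
            + |D / b| * |Real.exp (b * (x / ε)) - 1| := by
            refine le_trans (abs_add_le _ _) ?_
            rw [abs_mul, abs_mul]
        _ ≤ (Md * K) * (3*K) + (((Mc + 3*K*Md)/δ) * K) * 1 := by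
            refine add_le_add ?_ ?_
            · rw [habsb]
              exact mul_le_mul_of_nonneg_left (hinner (x/ε) hy0) (by positivity)
            · exact mul_le_mul habsD hEm1 (abs_nonneg _) (by positivity)
        _ = M := by rw [hM_def]; ring
    -- integrate the pointwise bound
    have hcont : Continuous (fun x : ℝ => ε ^ 2 *
        ((deriv c t / b) * ((x / ε - 1 / b) * Real.exp (b * (x / ε)) + 1 / b)
          + (D / b) * (Real.exp (b * (x / ε)) - 1)) ^ 2) := by
      fun_prop
    have hmono : (∫ x in (0:ℝ)..1, ε ^ 2 *
        ((deriv c t / b) * ((x / ε - 1 / b) * Real.exp (b * (x / ε)) + 1 / b)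
          + (D / b) * (Real.exp (b * (x / ε)) - 1)) ^ 2)
        ≤ ∫ _x in (0:ℝ)..1, ε^2 * M^2 := by
      refine intervalIntegral.integral_mono_on zero_le_one
        (hcont.intervalIntegrable _ _) (intervalIntegrable_const) ?_
      intro x hx
      have h := hU x hx
      have : ((deriv c t / b) * ((x / ε - 1 / b) * Real.exp (b * (x / ε)) + 1 / b)
          + (D / b) * (Real.exp (b * (x / ε)) - 1)) ^ 2 ≤ M^2 := by
        rw [← sq_abs]
        exact pow_le_pow_left₀ (abs_nonneg _) h 2
      nlinarith [sq_nonneg ε]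
    rw [hD_def, hN_def] at hmono
    refine le_trans hmono ?_
    rw [intervalIntegral.integral_const]
    simp only [sub_zero, one_smul]
    nlinarith [sq_nonneg ε, sq_nonneg M]
end
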